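/- Let v solve the 2D elliptic problem -Δ_H p(x,y) = ∫_{-1}^1 ∇_H·(∇_H·(v(x,y,z)⊗v(x,y,z))) dz on M = (0,L₁)×(0,L₂) with periodic boundary conditions and ∫_M p = 0, where v is a smooth periodic function on Ω = M × (-1,1). Then ‖∇_H p‖_{L²(M)} ≤ C ‖|v| ∇_H v‖_{L²(Ω)}, with C depending only on L₁, L₂. -/

import Mathlib

open MeasureTheory Real Set

noncomputable section

abbrev Pt := ℝ × ℝ × ℝ

/-- partial derivative in `x`. -/
def pdx (f : Pt → ℝ) (p : Pt) : ℝ := deriv (fun t => f (t, p.2.1, p.2.2)) p.1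
/-- partial derivative in `y`. -/
def pdy (f : Pt → ℝ) (p : Pt) : ℝ := deriv (fun t => f (p.1, t, p.2.2)) p.2.1
/-- partial derivative in `z`. -/
def pdz (f : Pt → ℝ) (p : Pt) : ℝ := deriv (fun t => f (p.1, p.2.1, t)) p.2.2

/-- full Laplacian. -/
def lap (f : Pt → ℝ) : Pt → ℝ := fun p => pdx (pdx f) p + pdy (pdy f) p + pdz (pdz f) p
/-- horizontal Laplacian. -/
def lapH (f : Pt → ℝ) : Pt → ℝ := fun p => pdx (pdx f) p + pdy (pdy f) p

/-- squared full gradient. -/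
def gradSq (f : Pt → ℝ) (p : Pt) : ℝ := (pdx f p)^2 + (pdy f p)^2 + (pdz f p)^2
/-- squared horizontal gradient. -/
def gradHSq (f : Pt → ℝ) (p : Pt) : ℝ := (pdx f p)^2 + (pdy f p)^2

/-- the horizontal domain `M = (0,L₁) × (0,L₂)`. -/
def MSet (L1 L2 : ℝ) : Set (ℝ × ℝ) := Ioo 0 L1 ×ˢ Ioo 0 L2
/-- the domain `Ω = M × (-1,1)`. -/
def OmegaSet (L1 L2 : ℝ) : Set Pt := Ioo 0 L1 ×ˢ (Ioo 0 L2 ×ˢ Ioo (-1 : ℝ) 1)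

/-- integral over `Ω`. -/
def intOn (L1 L2 : ℝ) (G : Pt → ℝ) : ℝ := ∫ p in OmegaSet L1 L2, G p

/-- periodicity in `x`, `y`, `z` with periods `L₁`, `L₂`, `2`. -/
def Periodic3 (L1 L2 : ℝ) (f : Pt → ℝ) : Prop :=
  (∀ p : Pt, f (p.1 + L1, p.2.1, p.2.2) = f p) ∧
  (∀ p : Pt, f (p.1, p.2.1 + L2, p.2.2) = f p) ∧
  (∀ p : Pt, f (p.1, p.2.1, p.2.2 + 2) = f p)

/-- squared `L²(Ω)` norm. -/
def L2sq (L1 L2 : ℝ) (F : Pt → ℝ) : ℝ := intOn L1 L2 (fun p => (F p)^2)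
/-- `L²(Ω)` norm. -/
def L2n (L1 L2 : ℝ) (F : Pt → ℝ) : ℝ := Real.sqrt (L2sq L1 L2 F)
/-- `L²(Ω)` norm of the horizontal gradient. -/
def L2gradH (L1 L2 : ℝ) (F : Pt → ℝ) : ℝ := Real.sqrt (intOn L1 L2 (gradHSq F))
/-- `L²(Ω)` norm of the full gradient. -/
def L2grad (L1 L2 : ℝ) (F : Pt → ℝ) : ℝ := Real.sqrt (intOn L1 L2 (gradSq F))

/-- first component of a horizontal vector field. -/
def c1 (v : Pt → ℝ × ℝ) : Pt → ℝ := fun p => (v p).1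
/-- second component of a horizontal vector field. -/
def c2 (v : Pt → ℝ × ℝ) : Pt → ℝ := fun p => (v p).2

/-- horizontal divergence. -/
def divH (v : Pt → ℝ × ℝ) : Pt → ℝ := fun p => pdx (c1 v) p + pdy (c2 v) p

/-- squared `L²(Ω)` norm of a horizontal vector field. -/
def vL2sq (L1 L2 : ℝ) (v : Pt → ℝ × ℝ) : ℝ := L2sq L1 L2 (c1 v) + L2sq L1 L2 (c2 v)
def vL2n (L1 L2 : ℝ) (v : Pt → ℝ × ℝ) : ℝ := Real.sqrt (vL2sq L1 L2 v)
/-- squared `L²(Ω)` norm of the full gradient of a horizontal vector field. -/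
def vGradSq (L1 L2 : ℝ) (v : Pt → ℝ × ℝ) : ℝ :=
  intOn L1 L2 (fun p => gradSq (c1 v) p + gradSq (c2 v) p)
def vGradn (L1 L2 : ℝ) (v : Pt → ℝ × ℝ) : ℝ := Real.sqrt (vGradSq L1 L2 v)
/-- squared `L²(Ω)` norm of the Laplacian of a horizontal vector field. -/
def vLapSq (L1 L2 : ℝ) (v : Pt → ℝ × ℝ) : ℝ :=
  intOn L1 L2 (fun p => (lap (c1 v) p)^2 + (lap (c2 v) p)^2)
def vLapn (L1 L2 : ℝ) (v : Pt → ℝ × ℝ) : ℝ := Real.sqrt (vLapSq L1 L2 v)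
/-- periodicity of a horizontal vector field. -/
def vPeriodic (L1 L2 : ℝ) (v : Pt → ℝ × ℝ) : Prop :=
  Periodic3 L1 L2 (c1 v) ∧ Periodic3 L1 L2 (c2 v)

/-- 2D partial derivative in `x`. -/
def qdx (f : ℝ × ℝ → ℝ) (q : ℝ × ℝ) : ℝ := deriv (fun t => f (t, q.2)) q.1
/-- 2D partial derivative in `y`. -/
def qdy (f : ℝ × ℝ → ℝ) (q : ℝ × ℝ) : ℝ := deriv (fun t => f (q.1, t)) q.2

/-- 2D periodicity with periods `L₁`, `L₂`. -/
def Periodic2 (L1 L2 : ℝ) (f : ℝ × ℝ → ℝ) : Prop :=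
  (∀ q : ℝ × ℝ, f (q.1 + L1, q.2) = f q) ∧ (∀ q : ℝ × ℝ, f (q.1, q.2 + L2) = f q)

/-- `∇_H·(∇_H·(v ⊗ v)) = ∂ᵢ∂ⱼ(vᵢ vⱼ)`. -/
def divDivVV (v : Pt → ℝ × ℝ) (p : Pt) : ℝ :=
  pdx (pdx (fun r => (v r).1 * (v r).1)) p + pdx (pdy (fun r => (v r).1 * (v r).2)) p
    + pdy (pdx (fun r => (v r).2 * (v r).1)) p + pdy (pdy (fun r => (v r).2 * (v r).2)) p


section Helpers

-- HasDerivAt for sections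
lemma hasDerivAtX {f : Pt → ℝ} (hf : Differentiable ℝ f) (x y z : ℝ) :
    HasDerivAt (fun t => f (t, y, z)) (fderiv ℝ f (x, y, z) (1, 0, 0)) x := by
  have h1 : HasDerivAt (fun t : ℝ => ((t, y, z) : Pt)) (1, 0, 0) x :=
    HasDerivAt.prodMk (hasDerivAt_id x) (HasDerivAt.prodMk (hasDerivAt_const x y) (hasDerivAt_const x z))
  exact (hf (x, y, z)).hasFDerivAt.comp_hasDerivAt x h1

lemma hasDerivAtY {f : Pt → ℝ} (hf : Differentiable ℝ f) (x y z : ℝ) :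
    HasDerivAt (fun t => f (x, t, z)) (fderiv ℝ f (x, y, z) (0, 1, 0)) y := by
  have h1 : HasDerivAt (fun t : ℝ => ((x, t, z) : Pt)) (0, 1, 0) y :=
    HasDerivAt.prodMk (hasDerivAt_const y x) (HasDerivAt.prodMk (hasDerivAt_id y) (hasDerivAt_const y z))
  exact (hf (x, y, z)).hasFDerivAt.comp_hasDerivAt y h1

lemma hasDerivAtQX {f : ℝ × ℝ → ℝ} (hf : Differentiable ℝ f) (x y : ℝ) :
    HasDerivAt (fun t => f (t, y)) (fderiv ℝ f (x, y) (1, 0)) x := by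
  have h1 : HasDerivAt (fun t : ℝ => ((t, y) : ℝ × ℝ)) (1, 0) x :=
    HasDerivAt.prodMk (hasDerivAt_id x) (hasDerivAt_const x y)
  exact (hf (x, y)).hasFDerivAt.comp_hasDerivAt x h1

lemma hasDerivAtQY {f : ℝ × ℝ → ℝ} (hf : Differentiable ℝ f) (x y : ℝ) :
    HasDerivAt (fun t => f (x, t)) (fderiv ℝ f (x, y) (0, 1)) y := by
  have h1 : HasDerivAt (fun t : ℝ => ((x, t) : ℝ × ℝ)) (0, 1) y :=
    HasDerivAt.prodMk (hasDerivAt_const y x) (hasDerivAt_id y)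
  exact (hf (x, y)).hasFDerivAt.comp_hasDerivAt y h1

lemma pdx_eq {f : Pt → ℝ} (hf : Differentiable ℝ f) :
    pdx f = fun p => fderiv ℝ f p (1, 0, 0) :=
  funext fun p => (hasDerivAtX hf p.1 p.2.1 p.2.2).deriv

lemma pdy_eq {f : Pt → ℝ} (hf : Differentiable ℝ f) :
    pdy f = fun p => fderiv ℝ f p (0, 1, 0) :=
  funext fun p => (hasDerivAtY hf p.1 p.2.1 p.2.2).deriv

lemma qdx_eq {f : ℝ × ℝ → ℝ} (hf : Differentiable ℝ f) :
    qdx f = fun q => fderiv ℝ f q (1, 0) :=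
  funext fun q => (hasDerivAtQX hf q.1 q.2).deriv

lemma qdy_eq {f : ℝ × ℝ → ℝ} (hf : Differentiable ℝ f) :
    qdy f = fun q => fderiv ℝ f q (0, 1) :=
  funext fun q => (hasDerivAtQY hf q.1 q.2).deriv

lemma contDiff_pdx {f : Pt → ℝ} (hf : ContDiff ℝ (⊤ : ℕ∞) f) : ContDiff ℝ (⊤ : ℕ∞) (pdx f) := by
  rw [pdx_eq (hf.differentiable (by simp))]
  exact (hf.fderiv_right (by exact (by simp))).clm_apply contDiff_const

lemma contDiff_pdy {f : Pt → ℝ} (hf : ContDiff ℝ (⊤ : ℕ∞) f) : ContDiff ℝ (⊤ : ℕ∞) (pdy f) := by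
  rw [pdy_eq (hf.differentiable (by simp))]
  exact (hf.fderiv_right (by exact (by simp))).clm_apply contDiff_const

lemma contDiff_qdx {f : ℝ × ℝ → ℝ} (hf : ContDiff ℝ (⊤ : ℕ∞) f) : ContDiff ℝ (⊤ : ℕ∞) (qdx f) := by
  rw [qdx_eq (hf.differentiable (by simp))]
  exact (hf.fderiv_right (by exact (by simp))).clm_apply contDiff_const

lemma contDiff_qdy {f : ℝ × ℝ → ℝ} (hf : ContDiff ℝ (⊤ : ℕ∞) f) : ContDiff ℝ (⊤ : ℕ∞) (qdy f) := by
  rw [qdy_eq (hf.differentiable (by simp))]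
  exact (hf.fderiv_right (by exact (by simp))).clm_apply contDiff_const

-- product rules
lemma pdx_mul {f g : Pt → ℝ} (hf : Differentiable ℝ f) (hg : Differentiable ℝ g) (p : Pt) :
    pdx (fun r => f r * g r) p = pdx f p * g p + f p * pdx g p := by
  have h1 := hasDerivAtX hf p.1 p.2.1 p.2.2
  have h2 := hasDerivAtX hg p.1 p.2.1 p.2.2
  have : deriv (fun t => f (t, p.2.1, p.2.2) * g (t, p.2.1, p.2.2)) p.1 = _ := (h1.mul h2).deriv
  rw [pdx, this, ← h1.deriv, ← h2.deriv]; rfl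

lemma pdy_mul {f g : Pt → ℝ} (hf : Differentiable ℝ f) (hg : Differentiable ℝ g) (p : Pt) :
    pdy (fun r => f r * g r) p = pdy f p * g p + f p * pdy g p := by
  have h1 := hasDerivAtY hf p.1 p.2.1 p.2.2
  have h2 := hasDerivAtY hg p.1 p.2.1 p.2.2
  have : deriv (fun t => f (p.1, t, p.2.2) * g (p.1, t, p.2.2)) p.2.1 = _ := (h1.mul h2).deriv
  rw [pdy, this, ← h1.deriv, ← h2.deriv]; rfl

lemma qdx_mul {f g : ℝ × ℝ → ℝ} (hf : Differentiable ℝ f) (hg : Differentiable ℝ g) (q : ℝ × ℝ) :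
    qdx (fun r => f r * g r) q = qdx f q * g q + f q * qdx g q := by
  have h1 := hasDerivAtQX hf q.1 q.2
  have h2 := hasDerivAtQX hg q.1 q.2
  have : deriv (fun t => f (t, q.2) * g (t, q.2)) q.1 = _ := (h1.mul h2).deriv
  rw [qdx, this, ← h1.deriv, ← h2.deriv]; rfl

lemma qdy_mul {f g : ℝ × ℝ → ℝ} (hf : Differentiable ℝ f) (hg : Differentiable ℝ g) (q : ℝ × ℝ) :
    qdy (fun r => f r * g r) q = qdy f q * g q + f q * qdy g q := by
  have h1 := hasDerivAtQY hf q.1 q.2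
  have h2 := hasDerivAtQY hg q.1 q.2
  have : deriv (fun t => f (q.1, t) * g (q.1, t)) q.2 = _ := (h1.mul h2).deriv
  rw [qdy, this, ← h1.deriv, ← h2.deriv]; rfl

-- periodic deriv

lemma intgOmega {f : Pt → ℝ} (hf : Continuous f) (L1 L2 : ℝ) :
    IntegrableOn f (OmegaSet L1 L2) := by
  have hK : IsCompact (Icc (0:ℝ) L1 ×ˢ (Icc (0:ℝ) L2 ×ˢ Icc (-1:ℝ) 1)) :=
    isCompact_Icc.prod (isCompact_Icc.prod isCompact_Icc)
  exact (hf.continuousOn.integrableOn_compact hK).mono_set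
    (prod_mono Ioo_subset_Icc_self (prod_mono Ioo_subset_Icc_self Ioo_subset_Icc_self))

lemma intgM {f : ℝ × ℝ → ℝ} (hf : Continuous f) (L1 L2 : ℝ) :
    IntegrableOn f (MSet L1 L2) := by
  have hK : IsCompact (Icc (0:ℝ) L1 ×ˢ Icc (0:ℝ) L2) := isCompact_Icc.prod isCompact_Icc
  exact (hf.continuousOn.integrableOn_compact hK).mono_set
    (prod_mono Ioo_subset_Icc_self Ioo_subset_Icc_self)

lemma intg2 {f : ℝ × ℝ → ℝ} (hf : Continuous f) (a b c d : ℝ) :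
    IntegrableOn f (Ioo a b ×ˢ Ioo c d) := by
  have hK : IsCompact (Icc a b ×ˢ Icc c d) := isCompact_Icc.prod isCompact_Icc
  exact (hf.continuousOn.integrableOn_compact hK).mono_set
    (prod_mono Ioo_subset_Icc_self Ioo_subset_Icc_self)

lemma intg1 {f : ℝ → ℝ} (hf : Continuous f) (a b : ℝ) :
    IntegrableOn f (Ioo a b) :=
  (hf.continuousOn.integrableOn_compact isCompact_Icc).mono_set Ioo_subset_Icc_self

lemma key1D {h : ℝ → ℝ} (hd : Differentiable ℝ h) (hc : Continuous (deriv h))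
    {L : ℝ} (hL : 0 < L) (hper : ∀ x, h (x + L) = h x) :
    ∫ x in Ioo (0:ℝ) L, deriv h x = 0 := by
  have e : ∫ x in Ioo (0:ℝ) L, deriv h x = ∫ x in (0:ℝ)..L, deriv h x := by
    rw [intervalIntegral.integral_of_le hL.le, integral_Ioc_eq_integral_Ioo]
  rw [e, intervalIntegral.integral_deriv_eq_sub (fun x _ => hd x)
    (hc.intervalIntegrable 0 L)]
  have := hper 0
  rw [zero_add] at this
  rw [this, sub_self]

/-- swap order of a set integral over a product -/
lemma swap_set {β : Type*} [MeasureSpace β] [SigmaFinite (volume : Measure β)]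
    {s : Set ℝ} {t : Set β} (F : ℝ × β → ℝ) (h : IntegrableOn F (s ×ˢ t)) :
    ∫ x in s, ∫ w in t, F (x, w) = ∫ w in t, ∫ x in s, F (x, w) := by
  have h' : Integrable (Function.uncurry fun x w => F (x, w))
      ((volume.restrict s).prod (volume.restrict t)) := by
    rw [Measure.prod_restrict, ← Measure.volume_eq_prod]
    exact h
  exact integral_integral_swap h'

lemma periodic_deriv_shift {g : ℝ → ℝ} {L : ℝ} (h : ∀ t, g (t + L) = g t) (x : ℝ) :
    deriv g (x + L) = deriv g x := by
  rw [← deriv_comp_add_const g L x]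
  exact congrFun (congrArg deriv (funext h)) x

variable {L : ℝ}

lemma perx_pdx {f : Pt → ℝ} (h : ∀ p : Pt, f (p.1 + L, p.2.1, p.2.2) = f p) :
    ∀ p : Pt, pdx f (p.1 + L, p.2.1, p.2.2) = pdx f p := fun p =>
  periodic_deriv_shift (fun t => h (t, p.2.1, p.2.2)) p.1

lemma perx_pdy {f : Pt → ℝ} (h : ∀ p : Pt, f (p.1 + L, p.2.1, p.2.2) = f p) :
    ∀ p : Pt, pdy f (p.1 + L, p.2.1, p.2.2) = pdy f p := fun p => by
  show deriv (fun t => f (p.1 + L, t, p.2.2)) p.2.1 = deriv (fun t => f (p.1, t, p.2.2)) p.2.1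
  congr 1
  funext t
  exact h (p.1, t, p.2.2)

lemma pery_pdx {f : Pt → ℝ} (h : ∀ p : Pt, f (p.1, p.2.1 + L, p.2.2) = f p) :
    ∀ p : Pt, pdx f (p.1, p.2.1 + L, p.2.2) = pdx f p := fun p => by
  show deriv (fun t => f (t, p.2.1 + L, p.2.2)) p.1 = deriv (fun t => f (t, p.2.1, p.2.2)) p.1
  congr 1
  funext t
  exact h (t, p.2.1, p.2.2)

lemma pery_pdy {f : Pt → ℝ} (h : ∀ p : Pt, f (p.1, p.2.1 + L, p.2.2) = f p) :
    ∀ p : Pt, pdy f (p.1, p.2.1 + L, p.2.2) = pdy f p := fun p =>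
  periodic_deriv_shift (fun t => h (p.1, t, p.2.2)) p.2.1

lemma per2x_qdx {f : ℝ × ℝ → ℝ} (h : ∀ q : ℝ × ℝ, f (q.1 + L, q.2) = f q) :
    ∀ q : ℝ × ℝ, qdx f (q.1 + L, q.2) = qdx f q := fun q =>
  periodic_deriv_shift (fun t => h (t, q.2)) q.1

lemma per2y_qdx {f : ℝ × ℝ → ℝ} (h : ∀ q : ℝ × ℝ, f (q.1, q.2 + L) = f q) :
    ∀ q : ℝ × ℝ, qdx f (q.1, q.2 + L) = qdx f q := fun q => by
  show deriv (fun t => f (t, q.2 + L)) q.1 = deriv (fun t => f (t, q.2)) q.1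
  congr 1
  funext t
  exact h (t, q.2)

lemma per2x_qdy {f : ℝ × ℝ → ℝ} (h : ∀ q : ℝ × ℝ, f (q.1 + L, q.2) = f q) :
    ∀ q : ℝ × ℝ, qdy f (q.1 + L, q.2) = qdy f q := fun q => by
  show deriv (fun t => f (q.1 + L, t)) q.2 = deriv (fun t => f (q.1, t)) q.2
  congr 1
  funext t
  exact h (q.1, t)

lemma per2y_qdy {f : ℝ × ℝ → ℝ} (h : ∀ q : ℝ × ℝ, f (q.1, q.2 + L) = f q) :
    ∀ q : ℝ × ℝ, qdy f (q.1, q.2 + L) = qdy f q := fun q =>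
  periodic_deriv_shift (fun t => h (q.1, t)) q.2

section S3
variable {L1 L2 : ℝ}

lemma izx (hL1 : 0 < L1) {H : Pt → ℝ} (hH : ContDiff ℝ (⊤ : ℕ∞) H)
    (per : ∀ p : Pt, H (p.1 + L1, p.2.1, p.2.2) = H p) :
    ∫ p in OmegaSet L1 L2, pdx H p = 0 := by
  have hc : Continuous (pdx H) := (contDiff_pdx hH).continuous
  have hint : IntegrableOn (pdx H) (OmegaSet L1 L2) := intgOmega hc L1 L2
  have e1 : ∫ p in OmegaSet L1 L2, pdx H p
      = ∫ x in Ioo (0:ℝ) L1, ∫ w in Ioo (0:ℝ) L2 ×ˢ Ioo (-1:ℝ) 1, pdx H (x, w) :=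
    setIntegral_prod _ hint
  rw [e1, swap_set _ hint]
  have inner0 : ∀ w : ℝ × ℝ, ∫ x in Ioo (0:ℝ) L1, pdx H (x, w) = 0 := by
    intro w
    have hd : Differentiable ℝ (fun t => H (t, w.1, w.2)) := fun x =>
      (hasDerivAtX (hH.differentiable (by simp)) x w.1 w.2).differentiableAt
    have hdc : Continuous (deriv (fun t => H (t, w.1, w.2))) := by
      show Continuous fun x => pdx H (x, w.1, w.2)
      exact hc.comp (continuous_id.prodMk continuous_const)
    exact key1D hd hdc hL1 (fun x => per (x, w.1, w.2))
  simp only [inner0, integral_zero]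

lemma izy (hL2 : 0 < L2) {H : Pt → ℝ} (hH : ContDiff ℝ (⊤ : ℕ∞) H)
    (per : ∀ p : Pt, H (p.1, p.2.1 + L2, p.2.2) = H p) :
    ∫ p in OmegaSet L1 L2, pdy H p = 0 := by
  have hc : Continuous (pdy H) := (contDiff_pdy hH).continuous
  have hint : IntegrableOn (pdy H) (OmegaSet L1 L2) := intgOmega hc L1 L2
  have e1 : ∫ p in OmegaSet L1 L2, pdy H p
      = ∫ x in Ioo (0:ℝ) L1, ∫ w in Ioo (0:ℝ) L2 ×ˢ Ioo (-1:ℝ) 1, pdy H (x, w) :=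
    setIntegral_prod _ hint
  rw [e1]
  have inner0 : ∀ x : ℝ, ∫ w in Ioo (0:ℝ) L2 ×ˢ Ioo (-1:ℝ) 1, pdy H (x, w) = 0 := by
    intro x
    have hsec : IntegrableOn (fun w : ℝ × ℝ => pdy H (x, w)) (Ioo (0:ℝ) L2 ×ˢ Ioo (-1:ℝ) 1) :=
      intg2 (hc.comp (continuous_const.prodMk continuous_id)) _ _ _ _
    have e2 : ∫ w in Ioo (0:ℝ) L2 ×ˢ Ioo (-1:ℝ) 1, pdy H (x, w)
        = ∫ y in Ioo (0:ℝ) L2, ∫ z in Ioo (-1:ℝ) 1, pdy H (x, y, z) :=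
      setIntegral_prod _ hsec
    rw [e2, swap_set _ hsec]
    have in2 : ∀ z : ℝ, ∫ y in Ioo (0:ℝ) L2, pdy H (x, y, z) = 0 := by
      intro z
      have hd : Differentiable ℝ (fun t => H (x, t, z)) := fun y =>
        (hasDerivAtY (hH.differentiable (by simp)) x y z).differentiableAt
      have hdc : Continuous (deriv (fun t => H (x, t, z))) := by
        show Continuous fun y => pdy H (x, y, z)
        exact hc.comp (continuous_const.prodMk (continuous_id.prodMk continuous_const))
      exact key1D hd hdc hL2 (fun y => per (x, y, z))
    simp only [in2, integral_zero]
  simp only [inner0, integral_zero]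

lemma izqx (hL1 : 0 < L1) {H : ℝ × ℝ → ℝ} (hH : ContDiff ℝ (⊤ : ℕ∞) H)
    (per : ∀ q : ℝ × ℝ, H (q.1 + L1, q.2) = H q) :
    ∫ q in MSet L1 L2, qdx H q = 0 := by
  have hc : Continuous (qdx H) := (contDiff_qdx hH).continuous
  have hint : IntegrableOn (qdx H) (MSet L1 L2) := intgM hc L1 L2
  have e1 : ∫ q in MSet L1 L2, qdx H q
      = ∫ x in Ioo (0:ℝ) L1, ∫ y in Ioo (0:ℝ) L2, qdx H (x, y) :=
    setIntegral_prod _ hint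
  rw [e1, swap_set _ hint]
  have inner0 : ∀ y : ℝ, ∫ x in Ioo (0:ℝ) L1, qdx H (x, y) = 0 := by
    intro y
    have hd : Differentiable ℝ (fun t => H (t, y)) := fun x =>
      (hasDerivAtQX (hH.differentiable (by simp)) x y).differentiableAt
    have hdc : Continuous (deriv (fun t => H (t, y))) := by
      show Continuous fun x => qdx H (x, y)
      exact hc.comp (continuous_id.prodMk continuous_const)
    exact key1D hd hdc hL1 (fun x => per (x, y))
  simp only [inner0, integral_zero]

lemma izqy (hL2 : 0 < L2) {H : ℝ × ℝ → ℝ} (hH : ContDiff ℝ (⊤ : ℕ∞) H)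
    (per : ∀ q : ℝ × ℝ, H (q.1, q.2 + L2) = H q) :
    ∫ q in MSet L1 L2, qdy H q = 0 := by
  have hc : Continuous (qdy H) := (contDiff_qdy hH).continuous
  have hint : IntegrableOn (qdy H) (MSet L1 L2) := intgM hc L1 L2
  have e1 : ∫ q in MSet L1 L2, qdy H q
      = ∫ x in Ioo (0:ℝ) L1, ∫ y in Ioo (0:ℝ) L2, qdy H (x, y) :=
    setIntegral_prod _ hint
  rw [e1]
  have inner0 : ∀ x : ℝ, ∫ y in Ioo (0:ℝ) L2, qdy H (x, y) = 0 := by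
    intro x
    have hd : Differentiable ℝ (fun t => H (x, t)) := fun y =>
      (hasDerivAtQY (hH.differentiable (by simp)) x y).differentiableAt
    have hdc : Continuous (deriv (fun t => H (x, t))) := by
      show Continuous fun y => qdy H (x, y)
      exact hc.comp (continuous_const.prodMk continuous_id)
    exact key1D hd hdc hL2 (fun y => per (x, y))
  simp only [inner0, integral_zero]

end S3

section S4
variable {L1 L2 : ℝ}

lemma ibp_x (hL1 : 0 < L1) {F G : Pt → ℝ} (hF : ContDiff ℝ (⊤ : ℕ∞) F) (hG : ContDiff ℝ (⊤ : ℕ∞) G)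
    (pF : ∀ p : Pt, F (p.1 + L1, p.2.1, p.2.2) = F p)
    (pG : ∀ p : Pt, G (p.1 + L1, p.2.1, p.2.2) = G p) :
    ∫ p in OmegaSet L1 L2, F p * pdx G p = - ∫ p in OmegaSet L1 L2, pdx F p * G p := by
  have hz : ∫ p in OmegaSet L1 L2, pdx (fun r => F r * G r) p = 0 :=
    izx hL1 (hF.mul hG) (fun p => by simp only [pF p, pG p])
  have hexp := pdx_mul (hF.differentiable (by simp)) (hG.differentiable (by simp))
  simp only [hexp] at hz
  have h1 : IntegrableOn (fun p => pdx F p * G p) (OmegaSet L1 L2) :=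
    intgOmega ((contDiff_pdx hF).continuous.mul hG.continuous) L1 L2
  have h2 : IntegrableOn (fun p => F p * pdx G p) (OmegaSet L1 L2) :=
    intgOmega (hF.continuous.mul (contDiff_pdx hG).continuous) L1 L2
  rw [integral_add h1 h2] at hz
  linarith

lemma ibp_y (hL2 : 0 < L2) {F G : Pt → ℝ} (hF : ContDiff ℝ (⊤ : ℕ∞) F) (hG : ContDiff ℝ (⊤ : ℕ∞) G)
    (pF : ∀ p : Pt, F (p.1, p.2.1 + L2, p.2.2) = F p)
    (pG : ∀ p : Pt, G (p.1, p.2.1 + L2, p.2.2) = G p) :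
    ∫ p in OmegaSet L1 L2, F p * pdy G p = - ∫ p in OmegaSet L1 L2, pdy F p * G p := by
  have hz : ∫ p in OmegaSet L1 L2, pdy (fun r => F r * G r) p = 0 :=
    izy hL2 (hF.mul hG) (fun p => by simp only [pF p, pG p])
  have hexp := pdy_mul (hF.differentiable (by simp)) (hG.differentiable (by simp))
  simp only [hexp] at hz
  have h1 : IntegrableOn (fun p => pdy F p * G p) (OmegaSet L1 L2) :=
    intgOmega ((contDiff_pdy hF).continuous.mul hG.continuous) L1 L2
  have h2 : IntegrableOn (fun p => F p * pdy G p) (OmegaSet L1 L2) :=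
    intgOmega (hF.continuous.mul (contDiff_pdy hG).continuous) L1 L2
  rw [integral_add h1 h2] at hz
  linarith

lemma ibpM_x (hL1 : 0 < L1) {F G : ℝ × ℝ → ℝ} (hF : ContDiff ℝ (⊤ : ℕ∞) F) (hG : ContDiff ℝ (⊤ : ℕ∞) G)
    (pF : ∀ q : ℝ × ℝ, F (q.1 + L1, q.2) = F q)
    (pG : ∀ q : ℝ × ℝ, G (q.1 + L1, q.2) = G q) :
    ∫ q in MSet L1 L2, F q * qdx G q = - ∫ q in MSet L1 L2, qdx F q * G q := by
  have hz : ∫ q in MSet L1 L2, qdx (fun r => F r * G r) q = 0 :=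
    izqx hL1 (hF.mul hG) (fun q => by simp only [pF q, pG q])
  have hexp := qdx_mul (hF.differentiable (by simp)) (hG.differentiable (by simp))
  simp only [hexp] at hz
  have h1 : IntegrableOn (fun q => qdx F q * G q) (MSet L1 L2) :=
    intgM ((contDiff_qdx hF).continuous.mul hG.continuous) L1 L2
  have h2 : IntegrableOn (fun q => F q * qdx G q) (MSet L1 L2) :=
    intgM (hF.continuous.mul (contDiff_qdx hG).continuous) L1 L2
  rw [integral_add h1 h2] at hz
  linarith

lemma ibpM_y (hL2 : 0 < L2) {F G : ℝ × ℝ → ℝ} (hF : ContDiff ℝ (⊤ : ℕ∞) F) (hG : ContDiff ℝ (⊤ : ℕ∞) G)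
    (pF : ∀ q : ℝ × ℝ, F (q.1, q.2 + L2) = F q)
    (pG : ∀ q : ℝ × ℝ, G (q.1, q.2 + L2) = G q) :
    ∫ q in MSet L1 L2, F q * qdy G q = - ∫ q in MSet L1 L2, qdy F q * G q := by
  have hz : ∫ q in MSet L1 L2, qdy (fun r => F r * G r) q = 0 :=
    izqy hL2 (hF.mul hG) (fun q => by simp only [pF q, pG q])
  have hexp := qdy_mul (hF.differentiable (by simp)) (hG.differentiable (by simp))
  simp only [hexp] at hz
  have h1 : IntegrableOn (fun q => qdy F q * G q) (MSet L1 L2) :=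
    intgM ((contDiff_qdy hF).continuous.mul hG.continuous) L1 L2
  have h2 : IntegrableOn (fun q => F q * qdy G q) (MSet L1 L2) :=
    intgM (hF.continuous.mul (contDiff_qdy hG).continuous) L1 L2
  rw [integral_add h1 h2] at hz
  linarith

lemma iter3 {G : Pt → ℝ} (hG : Continuous G) (L1 L2 : ℝ) :
    ∫ p in OmegaSet L1 L2, G p
      = ∫ x in Ioo (0:ℝ) L1, ∫ y in Ioo (0:ℝ) L2, ∫ z in Ioo (-1:ℝ) 1, G (x, y, z) := by
  have e1 : ∫ p in OmegaSet L1 L2, G p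
      = ∫ x in Ioo (0:ℝ) L1, ∫ w in Ioo (0:ℝ) L2 ×ˢ Ioo (-1:ℝ) 1, G (x, w) :=
    setIntegral_prod _ (intgOmega hG L1 L2)
  rw [e1]
  refine setIntegral_congr_fun measurableSet_Ioo fun x _ => ?_
  exact setIntegral_prod _ (intg2 (hG.comp (continuous_const.prodMk continuous_id)) _ _ _ _)

lemma iter2 {G : ℝ × ℝ → ℝ} (hG : Continuous G) (L1 L2 : ℝ) :
    ∫ q in MSet L1 L2, G q = ∫ x in Ioo (0:ℝ) L1, ∫ y in Ioo (0:ℝ) L2, G (x, y) :=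
  setIntegral_prod _ (intgM hG L1 L2)

lemma integral_CS {α : Type*} [MeasurableSpace α] {μ : Measure α} {f g : α → ℝ}
    (hf2 : Integrable (fun x => f x ^ 2) μ) (hg2 : Integrable (fun x => g x ^ 2) μ)
    (hfg : Integrable (fun x => f x * g x) μ) :
    (∫ x, f x * g x ∂μ) ^ 2 ≤ (∫ x, f x ^ 2 ∂μ) * ∫ x, g x ^ 2 ∂μ := by
  set F := ∫ x, f x ^ 2 ∂μ with hFdef
  set G := ∫ x, g x ^ 2 ∂μ with hGdef
  set T := ∫ x, f x * g x ∂μ with hTdef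
  have hF : 0 ≤ F := integral_nonneg fun x => sq_nonneg _
  have hG : 0 ≤ G := integral_nonneg fun x => sq_nonneg _
  have key : ∀ t : ℝ, 0 ≤ F - 2 * t * T + t ^ 2 * G := by
    intro t
    have h0 : 0 ≤ ∫ x, (f x - t * g x) ^ 2 ∂μ := integral_nonneg fun x => sq_nonneg _
    have hexp : (fun x => (f x - t * g x) ^ 2)
        = fun x => (f x ^ 2 - 2 * t * (f x * g x)) + t ^ 2 * g x ^ 2 :=
      funext fun x => by ring
    rw [hexp] at h0
    have hint1 : Integrable (fun x => f x ^ 2 - 2 * t * (f x * g x)) μ := by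
      exact hf2.sub (hfg.const_mul _)
    rw [integral_add hint1 (hg2.const_mul _), integral_sub hf2 (hfg.const_mul _),
      MeasureTheory.integral_const_mul, MeasureTheory.integral_const_mul] at h0
    linarith
  by_cases hGz : G = 0
  · have hT : T = 0 := by
      by_contra hT
      have h := key ((F + 1) / (2 * T))
      rw [hGz] at h
      have e : 2 * ((F + 1) / (2 * T)) * T = F + 1 := by field_simp
      rw [e] at h
      simp at h
      linarith
    rw [hT, hGz]
    norm_num
  · have hGpos : 0 < G := lt_of_le_of_ne hG (Ne.symm hGz)
    have h := key (T / G)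
    have e : F - 2 * (T / G) * T + (T / G) ^ 2 * G = F - T ^ 2 / G := by
      field_simp
      ring
    rw [e] at h
    have h2 : T ^ 2 / G ≤ F := by linarith
    have := (div_le_iff₀ hGpos).mp h2
    linarith

end S4

lemma ptCS (a1 a2 b1 b2 : ℝ) :
    -(a1 * b1 + a2 * b2) ≤ Real.sqrt (a1^2 + a2^2) * Real.sqrt (b1^2 + b2^2) := by
  have h1 : (a1*b1 + a2*b2)^2 ≤ (a1^2+a2^2) * (b1^2+b2^2) := by
    nlinarith [sq_nonneg (a1*b2 - a2*b1)]
  calc -(a1*b1 + a2*b2) ≤ |a1*b1 + a2*b2| := by exact neg_le_abs _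
    _ = Real.sqrt ((a1*b1 + a2*b2)^2) := (Real.sqrt_sq_eq_abs _).symm
    _ ≤ Real.sqrt ((a1^2+a2^2) * (b1^2+b2^2)) := Real.sqrt_le_sqrt h1
    _ = _ := Real.sqrt_mul (by positivity) _

lemma ptbound (v1 v2 a b c d : ℝ) :
    (a*v1 + v1*a + (c*v2 + v1*d))^2 + (b*v1 + v2*a + (d*v2 + v2*d))^2
      ≤ 24*((v1^2+v2^2)*((a^2+c^2)+(b^2+d^2))) := by
  nlinarith [sq_nonneg (a*v1 - c*v2), sq_nonneg (a*v1 - v1*d), sq_nonneg (c*v2 - v1*d),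
    sq_nonneg (b*v1 - v2*a), sq_nonneg (b*v1 - v2*d), sq_nonneg (v2*a - v2*d),
    sq_nonneg (a*v1 + c*v2 + v1*d), sq_nonneg (b*v1 + v2*a + v2*d),
    sq_nonneg (v1*a), sq_nonneg (v2*d), sq_nonneg (v1*b), sq_nonneg (v2*c),
    sq_nonneg (v1*c), sq_nonneg (v2*b), sq_nonneg (v1*d), sq_nonneg (v2*a)]

end Helpers

set_option maxHeartbeats 2000000 in
/-- elliptic estimate for the hydrostatic pressure. -/
theorem stmt_7 (L1 L2 : ℝ) (hL1 : 0 < L1) (hL2 : 0 < L2) :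
    ∃ C > 0, ∀ (pr : ℝ × ℝ → ℝ) (v : Pt → ℝ × ℝ),
      ContDiff ℝ (⊤ : ℕ∞) pr → ContDiff ℝ (⊤ : ℕ∞) (c1 v) → ContDiff ℝ (⊤ : ℕ∞) (c2 v) →
      Periodic2 L1 L2 pr → vPeriodic L1 L2 v →
      (∀ q : ℝ × ℝ, -(qdx (qdx pr) q + qdy (qdy pr) q)
          = ∫ z in (-1:ℝ)..1, divDivVV v (q.1, q.2, z)) →
      (∫ q in MSet L1 L2, pr q) = 0 →
      Real.sqrt (∫ q in MSet L1 L2, ((qdx pr q)^2 + (qdy pr q)^2))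
        ≤ C * Real.sqrt (intOn L1 L2
            (fun p => ((v p).1^2 + (v p).2^2) * (gradHSq (c1 v) p + gradHSq (c2 v) p))) := by
  refine ⟨7, by norm_num, ?_⟩
  intro pr v hpr hv1c hv2c hper hvper hPDE _hmean
  obtain ⟨hprx, hpry⟩ := hper
  obtain ⟨⟨hv1x, hv1y, _⟩, ⟨hv2x, hv2y, _⟩⟩ := hvper
  have hv1x' : ∀ x y z : ℝ, (v (x + L1, y, z)).1 = (v (x, y, z)).1 := fun x y z => hv1x (x, y, z)
  have hv1y' : ∀ x y z : ℝ, (v (x, y + L2, z)).1 = (v (x, y, z)).1 := fun x y z => hv1y (x, y, z)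
  have hv2x' : ∀ x y z : ℝ, (v (x + L1, y, z)).2 = (v (x, y, z)).2 := fun x y z => hv2x (x, y, z)
  have hv2y' : ∀ x y z : ℝ, (v (x, y + L2, z)).2 = (v (x, y, z)).2 := fun x y z => hv2y (x, y, z)
  have hv1 : ContDiff ℝ (⊤ : ℕ∞) (fun p : Pt => (v p).1) := hv1c
  have hv2 : ContDiff ℝ (⊤ : ℕ∞) (fun p : Pt => (v p).2) := hv2c
  have hv1d : Differentiable ℝ (fun p : Pt => (v p).1) := hv1.differentiable (by simp)
  have hv2d : Differentiable ℝ (fun p : Pt => (v p).2) := hv2.differentiable (by simp)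
  set P : Pt → ℝ := fun p => pr (p.1, p.2.1) with hPdef
  set w11 : Pt → ℝ := fun r => (v r).1 * (v r).1 with hw11
  set w12 : Pt → ℝ := fun r => (v r).1 * (v r).2 with hw12
  set w21 : Pt → ℝ := fun r => (v r).2 * (v r).1 with hw21
  set w22 : Pt → ℝ := fun r => (v r).2 * (v r).2 with hw22
  have hP : ContDiff ℝ (⊤ : ℕ∞) P := hpr.comp (contDiff_fst.prodMk (contDiff_fst.comp contDiff_snd))
  have hPx : ∀ p : Pt, P (p.1 + L1, p.2.1, p.2.2) = P p := fun p => hprx (p.1, p.2.1)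
  have hPy : ∀ p : Pt, P (p.1, p.2.1 + L2, p.2.2) = P p := fun p => hpry (p.1, p.2.1)
  have h11 : ContDiff ℝ (⊤ : ℕ∞) w11 := hv1.mul hv1
  have h12 : ContDiff ℝ (⊤ : ℕ∞) w12 := hv1.mul hv2
  have h21 : ContDiff ℝ (⊤ : ℕ∞) w21 := hv2.mul hv1
  have h22 : ContDiff ℝ (⊤ : ℕ∞) w22 := hv2.mul hv2
  have h11x : ∀ p : Pt, w11 (p.1 + L1, p.2.1, p.2.2) = w11 p := fun p => by
    show (v (p.1 + L1, p.2.1, p.2.2)).1 * (v (p.1 + L1, p.2.1, p.2.2)).1 = (v p).1 * (v p).1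
    rw [hv1x' p.1 p.2.1 p.2.2]
  have h12x : ∀ p : Pt, w12 (p.1 + L1, p.2.1, p.2.2) = w12 p := fun p => by
    show (v (p.1 + L1, p.2.1, p.2.2)).1 * (v (p.1 + L1, p.2.1, p.2.2)).2 = (v p).1 * (v p).2
    rw [hv1x' p.1 p.2.1 p.2.2, hv2x' p.1 p.2.1 p.2.2]
  have h21y : ∀ p : Pt, w21 (p.1, p.2.1 + L2, p.2.2) = w21 p := fun p => by
    show (v (p.1, p.2.1 + L2, p.2.2)).2 * (v (p.1, p.2.1 + L2, p.2.2)).1 = (v p).2 * (v p).1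
    rw [hv1y' p.1 p.2.1 p.2.2, hv2y' p.1 p.2.1 p.2.2]
  have h22y : ∀ p : Pt, w22 (p.1, p.2.1 + L2, p.2.2) = w22 p := fun p => by
    show (v (p.1, p.2.1 + L2, p.2.2)).2 * (v (p.1, p.2.1 + L2, p.2.2)).2 = (v p).2 * (v p).2
    rw [hv2y' p.1 p.2.1 p.2.2]
  -- Step I : 2D integration by parts
  have hqx := contDiff_qdx hpr
  have hqy := contDiff_qdy hpr
  have i1 : ∫ q in MSet L1 L2, pr q * qdx (qdx pr) q
      = - ∫ q in MSet L1 L2, qdx pr q * qdx pr q :=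
    ibpM_x hL1 hpr hqx hprx (per2x_qdx hprx)
  have i2 : ∫ q in MSet L1 L2, pr q * qdy (qdy pr) q
      = - ∫ q in MSet L1 L2, qdy pr q * qdy pr q :=
    ibpM_y hL2 hpr hqy hpry (per2y_qdy hpry)
  have jA1 : IntegrableOn (fun q => qdx pr q * qdx pr q) (MSet L1 L2) :=
    intgM (hqx.continuous.mul hqx.continuous) L1 L2
  have jA2 : IntegrableOn (fun q => qdy pr q * qdy pr q) (MSet L1 L2) :=
    intgM (hqy.continuous.mul hqy.continuous) L1 L2
  have hAsplit : (∫ q in MSet L1 L2, ((qdx pr q)^2 + (qdy pr q)^2))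
      = (∫ q in MSet L1 L2, qdx pr q * qdx pr q)
        + ∫ q in MSet L1 L2, qdy pr q * qdy pr q := by
    rw [← integral_add jA1 jA2]
    congr 1
    funext q
    ring
  have jRx : IntegrableOn (fun q => pr q * qdx (qdx pr) q) (MSet L1 L2) :=
    intgM (hpr.continuous.mul (contDiff_qdx hqx).continuous) L1 L2
  have jRy : IntegrableOn (fun q => pr q * qdy (qdy pr) q) (MSet L1 L2) :=
    intgM (hpr.continuous.mul (contDiff_qdy hqy).continuous) L1 L2
  have hRsplit : ∫ q in MSet L1 L2, pr q * (-(qdx (qdx pr) q + qdy (qdy pr) q))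
      = -(∫ q in MSet L1 L2, pr q * qdx (qdx pr) q)
        - ∫ q in MSet L1 L2, pr q * qdy (qdy pr) q := by
    have e : (fun q : ℝ × ℝ => pr q * (-(qdx (qdx pr) q + qdy (qdy pr) q)))
        = fun q => (-(pr q * qdx (qdx pr) q)) + (-(pr q * qdy (qdy pr) q)) :=
      funext fun q => by ring
    have jRxn : IntegrableOn (fun q => -(pr q * qdx (qdx pr) q)) (MSet L1 L2) := by
      exact jRx.neg
    have jRyn : IntegrableOn (fun q => -(pr q * qdy (qdy pr) q)) (MSet L1 L2) := by
      exact jRy.neg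
    rw [e, integral_add jRxn jRyn, integral_neg, integral_neg]
    ring
  have stepI : (∫ q in MSet L1 L2, ((qdx pr q)^2 + (qdy pr q)^2))
      = ∫ q in MSet L1 L2, pr q * (-(qdx (qdx pr) q + qdy (qdy pr) q)) := by
    rw [hRsplit, i1, i2, hAsplit]
    ring
  -- Step II : Fubini to Omega
  have hDDc : Continuous (divDivVV v) := by
    show Continuous (fun p : Pt => pdx (pdx w11) p + pdx (pdy w12) p
      + pdy (pdx w21) p + pdy (pdy w22) p)
    exact (((contDiff_pdx (contDiff_pdx h11)).continuous.add
      (contDiff_pdx (contDiff_pdy h12)).continuous).add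
      (contDiff_pdy (contDiff_pdx h21)).continuous).add
      (contDiff_pdy (contDiff_pdy h22)).continuous
  have hRc : Continuous (fun q : ℝ × ℝ => pr q * (-(qdx (qdx pr) q + qdy (qdy pr) q))) :=
    hpr.continuous.mul ((contDiff_qdx hqx).continuous.add (contDiff_qdy hqy).continuous).neg
  have stepII : ∫ p in OmegaSet L1 L2, P p * divDivVV v p
      = ∫ q in MSet L1 L2, pr q * (-(qdx (qdx pr) q + qdy (qdy pr) q)) := by
    rw [iter3 (G := fun p => P p * divDivVV v p) (hP.continuous.mul hDDc) L1 L2, iter2 hRc L1 L2]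
    refine setIntegral_congr_fun measurableSet_Ioo fun x _ => ?_
    refine setIntegral_congr_fun measurableSet_Ioo fun y _ => ?_
    show ∫ z in Ioo (-1:ℝ) 1, pr (x, y) * divDivVV v (x, y, z)
        = pr (x, y) * (-(qdx (qdx pr) (x, y) + qdy (qdy pr) (x, y)))
    rw [MeasureTheory.integral_const_mul]
    congr 1
    have hpde := hPDE (x, y)
    rw [intervalIntegral.integral_of_le (by norm_num : (-1:ℝ) ≤ 1),
      integral_Ioc_eq_integral_Ioo] at hpde
    exact hpde.symm
  -- Step III : decompose and integrate by parts over Omega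
  have j1 : IntegrableOn (fun p => P p * pdx (pdx w11) p) (OmegaSet L1 L2) :=
    intgOmega (hP.continuous.mul (contDiff_pdx (contDiff_pdx h11)).continuous) L1 L2
  have j2 : IntegrableOn (fun p => P p * pdx (pdy w12) p) (OmegaSet L1 L2) :=
    intgOmega (hP.continuous.mul (contDiff_pdx (contDiff_pdy h12)).continuous) L1 L2
  have j3 : IntegrableOn (fun p => P p * pdy (pdx w21) p) (OmegaSet L1 L2) :=
    intgOmega (hP.continuous.mul (contDiff_pdy (contDiff_pdx h21)).continuous) L1 L2
  have j4 : IntegrableOn (fun p => P p * pdy (pdy w22) p) (OmegaSet L1 L2) :=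
    intgOmega (hP.continuous.mul (contDiff_pdy (contDiff_pdy h22)).continuous) L1 L2
  have j12 : IntegrableOn (fun p => P p * pdx (pdx w11) p + P p * pdx (pdy w12) p)
      (OmegaSet L1 L2) := by exact j1.add j2
  have j123 : IntegrableOn (fun p =>
      (P p * pdx (pdx w11) p + P p * pdx (pdy w12) p) + P p * pdy (pdx w21) p)
      (OmegaSet L1 L2) := by exact j12.add j3
  have hsplit4 : ∫ p in OmegaSet L1 L2, P p * divDivVV v p
      = (((∫ p in OmegaSet L1 L2, P p * pdx (pdx w11) p)
        + ∫ p in OmegaSet L1 L2, P p * pdx (pdy w12) p)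
        + ∫ p in OmegaSet L1 L2, P p * pdy (pdx w21) p)
        + ∫ p in OmegaSet L1 L2, P p * pdy (pdy w22) p := by
    have e : (fun p : Pt => P p * divDivVV v p)
        = fun p => ((P p * pdx (pdx w11) p + P p * pdx (pdy w12) p)
            + P p * pdy (pdx w21) p) + P p * pdy (pdy w22) p := funext fun p => by
      show P p * (pdx (pdx w11) p + pdx (pdy w12) p + pdy (pdx w21) p + pdy (pdy w22) p) = _
      ring
    rw [e, integral_add j123 j4, integral_add j12 j3, integral_add j1 j2]
  have k1 : ∫ p in OmegaSet L1 L2, P p * pdx (pdx w11) p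
      = - ∫ p in OmegaSet L1 L2, pdx P p * pdx w11 p :=
    ibp_x hL1 hP (contDiff_pdx h11) hPx (perx_pdx h11x)
  have k2 : ∫ p in OmegaSet L1 L2, P p * pdx (pdy w12) p
      = - ∫ p in OmegaSet L1 L2, pdx P p * pdy w12 p :=
    ibp_x hL1 hP (contDiff_pdy h12) hPx (perx_pdy h12x)
  have k3 : ∫ p in OmegaSet L1 L2, P p * pdy (pdx w21) p
      = - ∫ p in OmegaSet L1 L2, pdy P p * pdx w21 p :=
    ibp_y hL2 hP (contDiff_pdx h21) hPy (pery_pdx h21y)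
  have k4 : ∫ p in OmegaSet L1 L2, P p * pdy (pdy w22) p
      = - ∫ p in OmegaSet L1 L2, pdy P p * pdy w22 p :=
    ibp_y hL2 hP (contDiff_pdy h22) hPy (pery_pdy h22y)
  have cDx : Continuous (pdx P) := (contDiff_pdx hP).continuous
  have cDy : Continuous (pdy P) := (contDiff_pdy hP).continuous
  have cu1 : Continuous (pdx w11) := (contDiff_pdx h11).continuous
  have cu2 : Continuous (pdy w12) := (contDiff_pdy h12).continuous
  have cu3 : Continuous (pdx w21) := (contDiff_pdx h21).continuous
  have cu4 : Continuous (pdy w22) := (contDiff_pdy h22).continuous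
  have jx1 : IntegrableOn (fun p => pdx P p * pdx w11 p) (OmegaSet L1 L2) :=
    intgOmega (cDx.mul cu1) L1 L2
  have jx2 : IntegrableOn (fun p => pdx P p * pdy w12 p) (OmegaSet L1 L2) :=
    intgOmega (cDx.mul cu2) L1 L2
  have jx3 : IntegrableOn (fun p => pdy P p * pdx w21 p) (OmegaSet L1 L2) :=
    intgOmega (cDy.mul cu3) L1 L2
  have jx4 : IntegrableOn (fun p => pdy P p * pdy w22 p) (OmegaSet L1 L2) :=
    intgOmega (cDy.mul cu4) L1 L2
  have m12 : IntegrableOn (fun p => (-(pdx P p * pdx w11 p)) + (-(pdx P p * pdy w12 p)))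
      (OmegaSet L1 L2) := by exact jx1.neg.add jx2.neg
  have m123 : IntegrableOn (fun p =>
      ((-(pdx P p * pdx w11 p)) + (-(pdx P p * pdy w12 p))) + (-(pdy P p * pdx w21 p)))
      (OmegaSet L1 L2) := by exact m12.add jx3.neg
  have hXsplit : ∫ p in OmegaSet L1 L2,
      (-(pdx P p * (pdx w11 p + pdy w12 p) + pdy P p * (pdx w21 p + pdy w22 p)))
      = (((∫ p in OmegaSet L1 L2, (-(pdx P p * pdx w11 p)))
        + ∫ p in OmegaSet L1 L2, (-(pdx P p * pdy w12 p)))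
        + ∫ p in OmegaSet L1 L2, (-(pdy P p * pdx w21 p)))
        + ∫ p in OmegaSet L1 L2, (-(pdy P p * pdy w22 p)) := by
    have e : (fun p : Pt =>
        (-(pdx P p * (pdx w11 p + pdy w12 p) + pdy P p * (pdx w21 p + pdy w22 p))))
        = fun p => (((-(pdx P p * pdx w11 p)) + (-(pdx P p * pdy w12 p)))
            + (-(pdy P p * pdx w21 p))) + (-(pdy P p * pdy w22 p)) := funext fun p => by ring
    have jx1n : IntegrableOn (fun p => -(pdx P p * pdx w11 p)) (OmegaSet L1 L2) := by
      exact jx1.neg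
    have jx2n : IntegrableOn (fun p => -(pdx P p * pdy w12 p)) (OmegaSet L1 L2) := by
      exact jx2.neg
    have jx3n : IntegrableOn (fun p => -(pdy P p * pdx w21 p)) (OmegaSet L1 L2) := by
      exact jx3.neg
    have jx4n : IntegrableOn (fun p => -(pdy P p * pdy w22 p)) (OmegaSet L1 L2) := by
      exact jx4.neg
    rw [e, integral_add m123 jx4n, integral_add m12 jx3n, integral_add jx1n jx2n]
  have stepIII : (∫ q in MSet L1 L2, ((qdx pr q)^2 + (qdy pr q)^2))
      = ∫ p in OmegaSet L1 L2,
        (-(pdx P p * (pdx w11 p + pdy w12 p) + pdy P p * (pdx w21 p + pdy w22 p))) := by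
    rw [hXsplit, integral_neg, integral_neg, integral_neg, integral_neg,
      stepI, ← stepII, hsplit4, k1, k2, k3, k4]
  -- Step IV : pointwise Cauchy-Schwarz and integral monotonicity
  have hXc : Continuous (fun p : Pt =>
      (-(pdx P p * (pdx w11 p + pdy w12 p) + pdy P p * (pdx w21 p + pdy w22 p)))) :=
    ((cDx.mul (cu1.add cu2)).add (cDy.mul (cu3.add cu4))).neg
  have hfc : Continuous (fun p : Pt => Real.sqrt ((pdx P p)^2 + (pdy P p)^2)) :=
    ((cDx.pow 2).add (cDy.pow 2)).sqrt
  have hgc : Continuous (fun p : Pt =>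
      Real.sqrt ((pdx w11 p + pdy w12 p)^2 + (pdx w21 p + pdy w22 p)^2)) :=
    (((cu1.add cu2).pow 2).add ((cu3.add cu4).pow 2)).sqrt
  have hAle : (∫ q in MSet L1 L2, ((qdx pr q)^2 + (qdy pr q)^2))
      ≤ ∫ p in OmegaSet L1 L2, (Real.sqrt ((pdx P p)^2 + (pdy P p)^2)
        * Real.sqrt ((pdx w11 p + pdy w12 p)^2 + (pdx w21 p + pdy w22 p)^2)) := by
    rw [stepIII]
    exact integral_mono (intgOmega hXc L1 L2) (intgOmega (hfc.mul hgc) L1 L2)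
      (fun p => ptCS _ _ _ _)
  -- Step V : Cauchy-Schwarz in L2
  have hf2int : IntegrableOn (fun p => (Real.sqrt ((pdx P p)^2 + (pdy P p)^2))^2)
      (OmegaSet L1 L2) := intgOmega (hfc.pow 2) L1 L2
  have hg2int : IntegrableOn (fun p =>
      (Real.sqrt ((pdx w11 p + pdy w12 p)^2 + (pdx w21 p + pdy w22 p)^2))^2)
      (OmegaSet L1 L2) := intgOmega (hgc.pow 2) L1 L2
  have hfgint : IntegrableOn (fun p => Real.sqrt ((pdx P p)^2 + (pdy P p)^2)
      * Real.sqrt ((pdx w11 p + pdy w12 p)^2 + (pdx w21 p + pdy w22 p)^2))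
      (OmegaSet L1 L2) := intgOmega (hfc.mul hgc) L1 L2
  have cs := integral_CS hf2int hg2int hfgint
  have ef2 : (fun p : Pt => (Real.sqrt ((pdx P p)^2 + (pdy P p)^2))^2)
      = fun p : Pt => (pdx P p)^2 + (pdy P p)^2 :=
    funext fun p => Real.sq_sqrt (by positivity)
  have eg2 : (fun p : Pt =>
      (Real.sqrt ((pdx w11 p + pdy w12 p)^2 + (pdx w21 p + pdy w22 p)^2))^2)
      = fun p : Pt => (pdx w11 p + pdy w12 p)^2 + (pdx w21 p + pdy w22 p)^2 :=
    funext fun p => Real.sq_sqrt (by positivity)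
  rw [ef2, eg2] at cs
  -- Step Va : evaluate the P-gradient integral
  have hQc : Continuous (fun q : ℝ × ℝ => (qdx pr q)^2 + (qdy pr q)^2) :=
    (hqx.continuous.pow 2).add (hqy.continuous.pow 2)
  have e2A : ∫ p in OmegaSet L1 L2, ((pdx P p)^2 + (pdy P p)^2)
      = 2 * ∫ q in MSet L1 L2, ((qdx pr q)^2 + (qdy pr q)^2) := by
    have e : (fun p : Pt => (pdx P p)^2 + (pdy P p)^2)
        = fun p : Pt => (qdx pr (p.1, p.2.1))^2 + (qdy pr (p.1, p.2.1))^2 := rfl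
    have hcont : Continuous (fun p : Pt => (qdx pr (p.1, p.2.1))^2 + (qdy pr (p.1, p.2.1))^2) :=
      hQc.comp (continuous_fst.prodMk (continuous_fst.comp continuous_snd))
    rw [e, iter3 hcont L1 L2]
    have hz : ∀ x y : ℝ, ∫ z in Ioo (-1:ℝ) 1, ((qdx pr (x, y))^2 + (qdy pr (x, y))^2)
        = 2 * ((qdx pr (x, y))^2 + (qdy pr (x, y))^2) := by
      intro x y
      rw [setIntegral_const]
      rw [Real.volume_real_Ioo]
      norm_num
    refine Eq.trans (b := ∫ x in Ioo (0:ℝ) L1, ∫ y in Ioo (0:ℝ) L2,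
        2 * ((qdx pr (x, y))^2 + (qdy pr (x, y))^2)) ?_ ?_
    · refine setIntegral_congr_fun measurableSet_Ioo fun x _ => ?_
      refine setIntegral_congr_fun measurableSet_Ioo fun y _ => ?_
      exact hz x y
    · have e5 : ∀ x : ℝ, ∫ y in Ioo (0:ℝ) L2, 2 * ((qdx pr (x, y))^2 + (qdy pr (x, y))^2)
          = 2 * ∫ y in Ioo (0:ℝ) L2, ((qdx pr (x, y))^2 + (qdy pr (x, y))^2) :=
        fun x => MeasureTheory.integral_const_mul 2 _
      rw [setIntegral_congr_fun measurableSet_Ioo fun x _ => e5 x,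
        MeasureTheory.integral_const_mul, ← iter2 hQc L1 L2]
  rw [e2A] at cs
  -- Step VI : bound the nonlinear term
  have hgradc1 : Continuous (fun p : Pt => gradHSq (fun r : Pt => (v r).1) p) := by
    show Continuous (fun p : Pt =>
      (pdx (fun r : Pt => (v r).1) p)^2 + (pdy (fun r : Pt => (v r).1) p)^2)
    exact ((contDiff_pdx hv1).continuous.pow 2).add ((contDiff_pdy hv1).continuous.pow 2)
  have hgradc2 : Continuous (fun p : Pt => gradHSq (fun r : Pt => (v r).2) p) := by
    show Continuous (fun p : Pt =>
      (pdx (fun r : Pt => (v r).2) p)^2 + (pdy (fun r : Pt => (v r).2) p)^2)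
    exact ((contDiff_pdx hv2).continuous.pow 2).add ((contDiff_pdy hv2).continuous.pow 2)
  have hSc : Continuous (fun p : Pt => 24 * (((v p).1^2 + (v p).2^2)
      * (gradHSq (c1 v) p + gradHSq (c2 v) p))) := by
    show Continuous (fun p : Pt => 24 * (((v p).1^2 + (v p).2^2)
      * (gradHSq (fun r : Pt => (v r).1) p + gradHSq (fun r : Pt => (v r).2) p)))
    exact continuous_const.mul (((hv1.continuous.pow 2).add (hv2.continuous.pow 2)).mul
      (hgradc1.add hgradc2))
  have hB24 : (∫ p in OmegaSet L1 L2,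
      ((pdx w11 p + pdy w12 p)^2 + (pdx w21 p + pdy w22 p)^2))
      ≤ ∫ p in OmegaSet L1 L2, 24 * (((v p).1^2 + (v p).2^2)
        * (gradHSq (c1 v) p + gradHSq (c2 v) p)) := by
    refine integral_mono (intgOmega (((cu1.add cu2).pow 2).add ((cu3.add cu4).pow 2)) L1 L2)
      (intgOmega hSc L1 L2) (fun p => ?_)
    show (pdx w11 p + pdy w12 p)^2 + (pdx w21 p + pdy w22 p)^2
        ≤ 24 * (((v p).1^2 + (v p).2^2)
          * (((pdx (fun r : Pt => (v r).1) p)^2 + (pdy (fun r : Pt => (v r).1) p)^2)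
            + ((pdx (fun r : Pt => (v r).2) p)^2 + (pdy (fun r : Pt => (v r).2) p)^2)))
    rw [hw11, hw12, hw21, hw22]
    rw [pdx_mul hv1d hv1d, pdy_mul hv1d hv2d, pdx_mul hv2d hv1d, pdy_mul hv2d hv2d]
    exact ptbound ((v p).1) ((v p).2) (pdx (fun r : Pt => (v r).1) p)
      (pdx (fun r : Pt => (v r).2) p) (pdy (fun r : Pt => (v r).1) p)
      (pdy (fun r : Pt => (v r).2) p)
  -- Step VII : conclude
  have hS0 : 0 ≤ ∫ p in OmegaSet L1 L2, (((v p).1^2 + (v p).2^2)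
      * (gradHSq (c1 v) p + gradHSq (c2 v) p)) := by
    refine integral_nonneg fun p => ?_
    have g1 : 0 ≤ gradHSq (c1 v) p := add_nonneg (sq_nonneg _) (sq_nonneg _)
    have g2 : 0 ≤ gradHSq (c2 v) p := add_nonneg (sq_nonneg _) (sq_nonneg _)
    exact mul_nonneg (by positivity) (add_nonneg g1 g2)
  have hS24 : ∫ p in OmegaSet L1 L2, 24 * (((v p).1^2 + (v p).2^2)
      * (gradHSq (c1 v) p + gradHSq (c2 v) p))
      = 24 * ∫ p in OmegaSet L1 L2, (((v p).1^2 + (v p).2^2)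
        * (gradHSq (c1 v) p + gradHSq (c2 v) p)) := MeasureTheory.integral_const_mul 24 _
  rw [hS24] at hB24
  have hA0 : 0 ≤ ∫ q in MSet L1 L2, ((qdx pr q)^2 + (qdy pr q)^2) :=
    integral_nonneg fun q => by positivity
  have hI0 : 0 ≤ ∫ p in OmegaSet L1 L2, (Real.sqrt ((pdx P p)^2 + (pdy P p)^2)
      * Real.sqrt ((pdx w11 p + pdy w12 p)^2 + (pdx w21 p + pdy w22 p)^2)) :=
    integral_nonneg fun p => mul_nonneg (Real.sqrt_nonneg _) (Real.sqrt_nonneg _)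
  show Real.sqrt (∫ q in MSet L1 L2, ((qdx pr q)^2 + (qdy pr q)^2))
      ≤ 7 * Real.sqrt (∫ p in OmegaSet L1 L2, (((v p).1^2 + (v p).2^2)
        * (gradHSq (c1 v) p + gradHSq (c2 v) p)))
  set A := ∫ q in MSet L1 L2, ((qdx pr q)^2 + (qdy pr q)^2) with hA
  set S := ∫ p in OmegaSet L1 L2, (((v p).1^2 + (v p).2^2)
    * (gradHSq (c1 v) p + gradHSq (c2 v) p)) with hS
  set I := ∫ p in OmegaSet L1 L2, (Real.sqrt ((pdx P p)^2 + (pdy P p)^2)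
    * Real.sqrt ((pdx w11 p + pdy w12 p)^2 + (pdx w21 p + pdy w22 p)^2)) with hI
  set B := ∫ p in OmegaSet L1 L2,
    ((pdx w11 p + pdy w12 p)^2 + (pdx w21 p + pdy w22 p)^2) with hB
  have hB0 : 0 ≤ B := integral_nonneg fun p => by positivity
  -- cs : I^2 ≤ 2*A*B ; hB24 : B ≤ 24*S ; hAle : A ≤ I
  have hI2 : I^2 ≤ (2*A) * (24*S) := by nlinarith [cs, hB24, hA0, hB0]
  have hA2 : A^2 ≤ 48*(A*S) := by nlinarith [hAle, hI0, hA0]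
  rcases eq_or_lt_of_le hA0 with hAz | hApos
  · rw [← hAz, Real.sqrt_zero]
    positivity
  · have hAS : A ≤ 48*S := by nlinarith [hApos]
    have hsq : Real.sqrt A ≤ Real.sqrt (49*S) := Real.sqrt_le_sqrt (by nlinarith [hS0])
    rw [Real.sqrt_mul (by norm_num : (0:ℝ) ≤ 49)] at hsq
    have h7 : Real.sqrt 49 = 7 := by
      rw [show (49:ℝ) = 7^2 by norm_num]
      exact Real.sqrt_sq (by norm_num)
    rw [h7] at hsq
    exact hsq
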